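/- arXiv:2011.02741 — 2 statements merged into one kernel-verified Lean document; each statement's English description precedes it below -/
import Mathlib

section
/- Let (X, G, Φ) be a dynamical system where X is a compact totally disconnected Hausdorff space, and let S be a finite subset of G. For 𝒰, 𝒱 ∈ Part(X) with 𝒱 ≻ 𝒰 and the induced map ι : 𝒱^G → 𝒰^G: (i) ι ∘ σ_g = σ_g ∘ ι for every g ∈ G; (ii) ι(𝒪(𝒱)) = 𝒪(𝒰); and (iii) 𝒪(𝒰) ⊆ ι(𝒫𝒪_S(𝒱)) ⊆ 𝒫𝒪_S(𝒰). -/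
open Set

universe u

/-! ### Dynamical systems: actions of a countable discrete group by homeomorphisms -/

/-- An action of a group `G` on a topological space `X`: each `act g` is a homeomorphism
(continuity of the inverse follows from `act g⁻¹`). -/
structure DynAction (G X : Type u) [Group G] [TopologicalSpace X] where
  act : G → X → X
  continuous_act : ∀ g : G, Continuous (act g)
  act_one : ∀ x : X, act 1 x = x
  act_mul : ∀ (g g' : G) (x : X), act (g * g') x = act g (act g' x)

section Covers

variable {G X : Type u} [Group G] [TopologicalSpace X]

/-- A finite open cover of `X`. -/
def IsFOC (𝒰 : Finset (Set X)) : Prop :=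
  (∀ U ∈ 𝒰, IsOpen U) ∧ ⋃₀ (𝒰 : Set (Set X)) = Set.univ

/-- A finite partition of `X` into nonempty clopen sets. -/
def IsClopenPartition (𝒰 : Finset (Set X)) : Prop :=
  (∀ U ∈ 𝒰, IsClopen U ∧ U.Nonempty) ∧ ⋃₀ (𝒰 : Set (Set X)) = Set.univ ∧
    ∀ U ∈ 𝒰, ∀ V ∈ 𝒰, U ≠ V → U ∩ V = ∅

/-- `𝒱` refines `𝒰`: every member of `𝒱` is contained in a member of `𝒰`. -/
def Refines (𝒱 𝒰 : Finset (Set X)) : Prop :=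
  ∀ V ∈ 𝒱, ∃ U ∈ 𝒰, V ⊆ U

/-- `{U g}` is a pattern of the `(S,𝒰)`-pseudo-orbit `{x g}`:
all `U g` belong to `𝒰`, and `x (s*g) ∈ U (s*g)` and `Φ_s (x g) ∈ U (s*g)`
for all `g ∈ G`, `s ∈ S`. -/
def IsPseudoOrbitPattern (Φ : DynAction G X) (S : Set G) (𝒰 : Finset (Set X))
    (x : G → X) (U : G → Set X) : Prop :=
  (∀ g : G, U g ∈ 𝒰) ∧
    ∀ g : G, ∀ s ∈ S, x (s * g) ∈ U (s * g) ∧ Φ.act s (x g) ∈ U (s * g)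

/-- `{x g}` is an `(S,𝒰)`-pseudo-orbit. -/
def IsPseudoOrbit (Φ : DynAction G X) (S : Set G) (𝒰 : Finset (Set X)) (x : G → X) : Prop :=
  ∃ U : G → Set X, IsPseudoOrbitPattern Φ S 𝒰 x U

/-- `z` `𝒰`-shadows the family `{x g}`. -/
def Shadows (Φ : DynAction G X) (𝒰 : Finset (Set X)) (z : X) (x : G → X) : Prop :=
  ∀ g : G, ∃ U ∈ 𝒰, Φ.act g z ∈ U ∧ x g ∈ U

/-- The (topological) `S`-shadowing property. -/
def ShadowingProperty (Φ : DynAction G X) (S : Set G) : Prop :=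
  ∀ 𝒰 : Finset (Set X), IsFOC 𝒰 → ∃ 𝒱 : Finset (Set X), IsFOC 𝒱 ∧
    ∀ x : G → X, IsPseudoOrbit Φ S 𝒱 x → ∃ z : X, Shadows Φ 𝒰 z x

/-! ### Equivariant maps, factor maps, conjugacies -/

def IsEquivariant {Y : Type u} [TopologicalSpace Y]
    (ΦX : DynAction G X) (ΦY : DynAction G Y) (f : X → Y) : Prop :=
  ∀ (g : G) (x : X), f (ΦX.act g x) = ΦY.act g (f x)

/-- `f` is a factor map from `(X,G,ΦX)` onto `(Y,G,ΦY)`. -/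
def IsFactorMap {Y : Type u} [TopologicalSpace Y]
    (ΦX : DynAction G X) (ΦY : DynAction G Y) (f : X → Y) : Prop :=
  Continuous f ∧ Function.Surjective f ∧ IsEquivariant ΦX ΦY f

/-- `f` is a conjugacy (bijective factor map). -/
def IsConjugacy {Y : Type u} [TopologicalSpace Y]
    (ΦX : DynAction G X) (ΦY : DynAction G Y) (f : X → Y) : Prop :=
  Continuous f ∧ Function.Bijective f ∧ IsEquivariant ΦX ΦY f

end Covers

/-! ### Shifts, subshifts, shifts of finite type -/

/-- The shift action on `A^G`: `(σ_g x) h = x (h * g)`. -/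
def shift (G A : Type u) [Group G] (g : G) (x : G → A) : G → A :=
  fun h => x (h * g)

/-- The full shift `A^G` (product topology) as a dynamical system. -/
def shiftDyn (G A : Type u) [Group G] [TopologicalSpace A] : DynAction G (G → A) where
  act := shift G A
  continuous_act g := continuous_pi fun h => continuous_apply (h * g)
  act_one x := by funext h; simp [shift]
  act_mul g g' x := by funext h; simp [shift, mul_assoc]

/-- A subshift: a closed shift-invariant subset of the full shift `A^G`. -/
def IsSubshift {G A : Type u} [Group G] [TopologicalSpace A] (Y : Set (G → A)) : Prop :=
  IsClosed Y ∧ ∀ g : G, ∀ x ∈ Y, shift G A g x ∈ Y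

/-- The cylinder set determined by the values of `P` on the finite shape `B`. -/
def cylinder {G A : Type u} (B : Finset G) (P : G → A) : Set (G → A) :=
  {y | ∀ b ∈ B, y b = P b}

/-- The language of `Y ⊆ A^G` over the finite shape `B` (a pattern is recorded by any
function `G → A` with the prescribed values on `B`). -/
def language {G A : Type u} (B : Finset G) (Y : Set (G → A)) : Set (G → A) :=
  {P | (cylinder B P ∩ Y).Nonempty}

/-- `Y` is a shift of finite type over the finite shape `B`: it is cut out by a family of
forbidden patterns on `B`. -/
def IsSFTOver {G A : Type u} [Group G] (B : Finset G) (Y : Set (G → A)) : Prop :=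
  ∃ ℱ : Set (G → A), Y = {x | ∀ g : G, ∀ P ∈ ℱ, shift G A g x ∉ cylinder B P}

/-- The shift action restricted to a subshift. -/
def subshiftDyn {G A : Type u} [Group G] [TopologicalSpace A] (Y : Set (G → A))
    (hY : IsSubshift Y) : DynAction G ↥Y where
  act g x := ⟨shift G A g x.1, hY.2 g x.1 x.2⟩
  continuous_act g := Continuous.subtype_mk
    ((continuous_pi fun h => continuous_apply (h * g)).comp continuous_subtype_val) _
  act_one x := by apply Subtype.ext; funext h; simp [shift]
  act_mul g g' x := by apply Subtype.ext; funext h; simp [shift, mul_assoc]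

/-! ### Hitting time sets and mixing-type properties -/

section Mixing

variable {G X : Type u} [Group G] [TopologicalSpace X]

/-- The hitting time set `N(U,V) = {g ≠ e : U ∩ Φ_{g⁻¹}(V) ≠ ∅}`. -/
def hittingTimes (Φ : DynAction G X) (U V : Set X) : Set G :=
  {g : G | g ≠ 1 ∧ (U ∩ Φ.act g⁻¹ '' V).Nonempty}

/-- Topological mixing: `G \ N(U,V)` is finite for all nonempty open `U, V`. -/
def IsMixing (Φ : DynAction G X) : Prop :=
  ∀ U V : Set X, IsOpen U → IsOpen V → U.Nonempty → V.Nonempty →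
    ((hittingTimes Φ U V)ᶜ : Set G).Finite

/-- Minimality: there is no nonempty proper closed invariant subset. -/
def IsMinimal (Φ : DynAction G X) : Prop :=
  ∀ K : Set X, IsClosed K → (∀ g : G, ∀ x ∈ K, Φ.act g x ∈ K) →
    K = ∅ ∨ K = Set.univ

end Mixing

/-! ### Orbit spaces and pseudo-orbit spaces of finite covers -/

/-- An element of the finite cover `𝒰`, regarded as a letter of a (discrete) finite
alphabet. -/
structure CoverElt {X : Type u} (𝒰 : Finset (Set X)) where
  val : Set X
  mem : val ∈ 𝒰

instance {X : Type u} (𝒰 : Finset (Set X)) : TopologicalSpace (CoverElt 𝒰) := ⊥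
instance {X : Type u} (𝒰 : Finset (Set X)) : DiscreteTopology (CoverElt 𝒰) := ⟨rfl⟩
instance {X : Type u} (𝒰 : Finset (Set X)) : Finite (CoverElt 𝒰) :=
  Finite.of_injective (fun e => (⟨e.val, e.mem⟩ : {U : Set X // U ∈ 𝒰}))
    (fun a b hab => by cases a; cases b; simpa using hab)

/-- The `𝒰`-orbit space `𝒪(𝒰)`: the closure in the full shift `𝒰^G` of the set of
orbit patterns. -/
def orbitSpace {G X : Type u} [Group G] [TopologicalSpace X]
    (Φ : DynAction G X) (𝒰 : Finset (Set X)) : Set (G → CoverElt 𝒰) :=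
  closure {u : G → CoverElt 𝒰 | (⋂ g : G, Φ.act g⁻¹ '' (u g).val).Nonempty}

/-- The `(S,𝒰)`-pseudo-orbit space `𝒫𝒪_S(𝒰)`: all patterns of `(S,𝒰)`-pseudo-orbits. -/
def psOrbitSpace {G X : Type u} [Group G] [TopologicalSpace X]
    (Φ : DynAction G X) (S : Set G) (𝒰 : Finset (Set X)) : Set (G → CoverElt 𝒰) :=
  {u : G → CoverElt 𝒰 | ∃ x : G → X, IsPseudoOrbitPattern Φ S 𝒰 x (fun g => (u g).val)}

/-! Refining a clopen partition does not change which orbits are visible: every orbit pattern of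
`𝒰` is the coarsening of the itinerary, with respect to `𝒱`, of the same point. Since the full
shift over `𝒱` is compact, coarsening is a closed map, so it carries `𝒪(𝒱)` onto `𝒪(𝒰)`.
The pseudo-orbit space is closed as well, being the projection of the compact set of pairs
(pattern, pseudo-orbit), so its image under coarsening is closed; this image contains the
coarsened orbit patterns of `𝒱`, which are all orbit patterns of `𝒰`, hence also `𝒪(𝒰)`. -/

namespace DynAction

variable {G X : Type u} [Group G] [TopologicalSpace X]

lemma mem_act_inv_image_iff (Φ : DynAction G X) (g : G) (W : Set X) (x : X) :
    x ∈ Φ.act g⁻¹ '' W ↔ Φ.act g x ∈ W := by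
  constructor
  · rintro ⟨w, hw, rfl⟩
    rwa [← Φ.act_mul, mul_inv_cancel, Φ.act_one]
  · intro h
    exact ⟨Φ.act g x, h, by rw [← Φ.act_mul, inv_mul_cancel, Φ.act_one]⟩

end DynAction

namespace CoverElt

variable {X : Type u} {𝒰 : Finset (Set X)}

lemma eq_of_mem (h𝒰 : ∀ U ∈ 𝒰, ∀ V ∈ 𝒰, U ≠ V → U ∩ V = ∅)
    {a b : CoverElt 𝒰} {y : X} (ha : y ∈ a.val) (hb : y ∈ b.val) : a = b := by
  obtain ⟨A, hA⟩ := a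
  obtain ⟨B, hB⟩ := b
  obtain rfl : A = B := by
    by_contra hAB
    simpa [h𝒰 A hA B hB hAB] using mem_inter ha hb
  rfl

lemma exists_mem (h𝒰 : ⋃₀ (𝒰 : Set (Set X)) = univ) (y : X) :
    ∃ a : CoverElt 𝒰, y ∈ a.val := by
  obtain ⟨U, hU, hyU⟩ : y ∈ ⋃₀ (𝒰 : Set (Set X)) := h𝒰 ▸ mem_univ y
  exact ⟨⟨U, hU⟩, hyU⟩

lemma isClosed_setOf_mem {Y : Type*} [TopologicalSpace X] [TopologicalSpace Y]
    (h𝒰 : ∀ U ∈ 𝒰, IsClosed U) {a : Y → CoverElt 𝒰} {y : Y → X}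
    (ha : Continuous a) (hy : Continuous y) :
    IsClosed {p | y p ∈ (a p).val} := by
  have : {p | y p ∈ (a p).val} = ⋃ b : CoverElt 𝒰, a ⁻¹' {b} ∩ y ⁻¹' b.val := by
    ext p
    simp
  rw [this]
  exact isClosed_iUnion_of_finite fun b =>
    ((isClosed_discrete {b}).preimage ha).inter ((h𝒰 _ b.mem).preimage hy)

end CoverElt

section OrbitSpaces

variable {G X : Type u} [Group G] [TopologicalSpace X] (Φ : DynAction G X)

def orbitPatterns (𝒰 : Finset (Set X)) : Set (G → CoverElt 𝒰) :=
  {u | (⋂ g : G, Φ.act g⁻¹ '' (u g).val).Nonempty}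

lemma orbitSpace_eq_closure (𝒰 : Finset (Set X)) :
    orbitSpace Φ 𝒰 = closure (orbitPatterns Φ 𝒰) :=
  rfl

lemma mem_orbitPatterns_iff {𝒰 : Finset (Set X)} {u : G → CoverElt 𝒰} :
    u ∈ orbitPatterns Φ 𝒰 ↔ ∃ x, ∀ g, Φ.act g x ∈ (u g).val := by
  simp only [orbitPatterns, mem_ofPred_eq, Set.Nonempty, mem_iInter,
    Φ.mem_act_inv_image_iff]

lemma orbitPatterns_subset_psOrbitSpace (S : Set G) (𝒰 : Finset (Set X)) :
    orbitPatterns Φ 𝒰 ⊆ psOrbitSpace Φ S 𝒰 := by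
  intro u hu
  obtain ⟨x, hx⟩ := (mem_orbitPatterns_iff Φ).1 hu
  refine ⟨fun g => Φ.act g x, fun g => (u g).mem, fun g s _ => ⟨hx (s * g), ?_⟩⟩
  rw [← Φ.act_mul]
  exact hx (s * g)

lemma psOrbitSpace_eq_image_fst (S : Set G) (𝒰 : Finset (Set X)) :
    psOrbitSpace Φ S 𝒰 = Prod.fst '' {p : (G → CoverElt 𝒰) × (G → X) |
      ∀ g, ∀ s ∈ S, p.2 (s * g) ∈ (p.1 (s * g)).val ∧ Φ.act s (p.2 g) ∈ (p.1 (s * g)).val} := by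
  ext u
  simp [psOrbitSpace, IsPseudoOrbitPattern, CoverElt.mem]

lemma isClosed_psOrbitSpace [CompactSpace X] (S : Set G) {𝒰 : Finset (Set X)}
    (h𝒰 : ∀ U ∈ 𝒰, IsClosed U) : IsClosed (psOrbitSpace Φ S 𝒰) := by
  rw [psOrbitSpace_eq_image_fst]
  refine (IsClosed.isCompact ?_ |>.image continuous_fst).isClosed
  simp only [ofPred_forall, ofPred_and]
  refine isClosed_iInter fun g => isClosed_iInter fun s => isClosed_iInter fun _ =>
    IsClosed.inter ?_ ?_
  · exact CoverElt.isClosed_setOf_mem h𝒰 ((continuous_apply _).comp continuous_fst)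
      ((continuous_apply _).comp continuous_snd)
  · exact CoverElt.isClosed_setOf_mem h𝒰 ((continuous_apply _).comp continuous_fst)
      ((Φ.continuous_act s).comp ((continuous_apply g).comp continuous_snd))

variable {𝒰 𝒱 : Finset (Set X)} {ι : CoverElt 𝒱 → CoverElt 𝒰}

lemma image_orbitPatterns (h𝒰 : ∀ U ∈ 𝒰, ∀ V ∈ 𝒰, U ≠ V → U ∩ V = ∅)
    (h𝒱 : ⋃₀ (𝒱 : Set (Set X)) = univ) (hι : ∀ V : CoverElt 𝒱, V.val ⊆ (ι V).val) :
    (fun (u : G → CoverElt 𝒱) (h : G) => ι (u h)) '' orbitPatterns Φ 𝒱 = orbitPatterns Φ 𝒰 := by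
  apply Subset.antisymm
  · rintro _ ⟨v, hv, rfl⟩
    obtain ⟨x, hx⟩ := (mem_orbitPatterns_iff Φ).1 hv
    exact (mem_orbitPatterns_iff Φ).2 ⟨x, fun g => hι _ (hx g)⟩
  · intro u hu
    obtain ⟨x, hx⟩ := (mem_orbitPatterns_iff Φ).1 hu
    choose itinerary h_itinerary using fun g => CoverElt.exists_mem h𝒱 (Φ.act g x)
    exact ⟨itinerary, (mem_orbitPatterns_iff Φ).2 ⟨x, h_itinerary⟩,
      funext fun g => CoverElt.eq_of_mem h𝒰 (hι _ (h_itinerary g)) (hx g)⟩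

lemma image_psOrbitSpace_subset (S : Set G) (hι : ∀ V : CoverElt 𝒱, V.val ⊆ (ι V).val) :
    (fun (u : G → CoverElt 𝒱) (h : G) => ι (u h)) '' psOrbitSpace Φ S 𝒱 ⊆
      psOrbitSpace Φ S 𝒰 := by
  rintro _ ⟨v, ⟨x, -, hx⟩, rfl⟩
  exact ⟨x, fun g => (ι (v g)).mem, fun g s hs => ⟨hι _ (hx g s hs).1, hι _ (hx g s hs).2⟩⟩

end OrbitSpaces

theorem iota_commutes_and_maps_orbitSpaces_general
    {G X : Type} [Group G] [TopologicalSpace X]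
    [CompactSpace X]
    (Φ : DynAction G X) (S : Finset G)
    (𝒰 𝒱 : Finset (Set X)) (h𝒰 : IsClopenPartition 𝒰) (h𝒱 : IsClopenPartition 𝒱)
    (ι : CoverElt 𝒱 → CoverElt 𝒰) (hι : ∀ V : CoverElt 𝒱, V.val ⊆ (ι V).val) :
    (∀ (g : G) (u : G → CoverElt 𝒱),
        (fun h => ι (shift G (CoverElt 𝒱) g u h)) = shift G (CoverElt 𝒰) g (fun h => ι (u h))) ∧
    (fun (u : G → CoverElt 𝒱) => fun h => ι (u h)) '' orbitSpace Φ 𝒱 = orbitSpace Φ 𝒰 ∧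
    orbitSpace Φ 𝒰 ⊆
      (fun (u : G → CoverElt 𝒱) => fun h => ι (u h)) '' psOrbitSpace Φ (S : Set G) 𝒱 ∧
    (fun (u : G → CoverElt 𝒱) => fun h => ι (u h)) '' psOrbitSpace Φ (S : Set G) 𝒱 ⊆
      psOrbitSpace Φ (S : Set G) 𝒰 := by
  set coarsen := fun (u : G → CoverElt 𝒱) (h : G) => ι (u h)
  have hcont : Continuous coarsen :=
    continuous_pi fun h => continuous_of_discreteTopology.comp (continuous_apply h)
  have hclosed : IsClosedMap coarsen := hcont.isClosedMap
  have himage : coarsen '' orbitPatterns Φ 𝒱 = orbitPatterns Φ 𝒰 :=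
    image_orbitPatterns Φ h𝒰.2.2 h𝒱.2.1 hι
  refine ⟨fun g u => rfl, ?_, ?_, image_psOrbitSpace_subset Φ S hι⟩
  · rw [orbitSpace_eq_closure, orbitSpace_eq_closure, ← himage,
      hclosed.closure_image_eq_of_continuous hcont]
  · rw [orbitSpace_eq_closure, ← himage]
    exact closure_minimal (image_mono (orbitPatterns_subset_psOrbitSpace Φ _ 𝒱))
      (hclosed _ (isClosed_psOrbitSpace Φ _ fun V hV => (h𝒱.1 V hV).1.isClosed))

/-- **Lemma 4.1.** For clopen partitions `𝒱 ≻ 𝒰` of a compact totally disconnected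
Hausdorff space, the induced map `ι` commutes with the shift, maps `𝒪(𝒱)` onto `𝒪(𝒰)`,
and `𝒪(𝒰) ⊆ ι(𝒫𝒪_S(𝒱)) ⊆ 𝒫𝒪_S(𝒰)`. -/
theorem iota_commutes_and_maps_orbitSpaces
    {G X : Type} [Group G] [Countable G] [TopologicalSpace X]
    [CompactSpace X] [T2Space X] [TotallyDisconnectedSpace X]
    (Φ : DynAction G X) (S : Finset G)
    (𝒰 𝒱 : Finset (Set X)) (h𝒰 : IsClopenPartition 𝒰) (h𝒱 : IsClopenPartition 𝒱)
    (href : Refines 𝒱 𝒰)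
    (ι : CoverElt 𝒱 → CoverElt 𝒰) (hι : ∀ V : CoverElt 𝒱, V.val ⊆ (ι V).val) :
    (∀ (g : G) (u : G → CoverElt 𝒱),
        (fun h => ι (shift G (CoverElt 𝒱) g u h)) = shift G (CoverElt 𝒰) g (fun h => ι (u h))) ∧
    (fun (u : G → CoverElt 𝒱) => fun h => ι (u h)) '' orbitSpace Φ 𝒱 = orbitSpace Φ 𝒰 ∧
    orbitSpace Φ 𝒰 ⊆
      (fun (u : G → CoverElt 𝒱) => fun h => ι (u h)) '' psOrbitSpace Φ (S : Set G) 𝒱 ∧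
    (fun (u : G → CoverElt 𝒱) => fun h => ι (u h)) '' psOrbitSpace Φ (S : Set G) 𝒱 ⊆
      psOrbitSpace Φ (S : Set G) 𝒰 :=
  iota_commutes_and_maps_orbitSpaces_general Φ S 𝒰 𝒱 h𝒰 h𝒱 ι hι
end

section
/- Let (X, G, Φ^X) and (Y, G, Φ^Y) be dynamical systems, S a finite subset of G, and φ : X → Y a factor map. Then: (1) if Φ^X has the S-shadowing property and φ almost lifts pseudo-orbits for S, then Φ^Y has the S-shadowing property; and (2) if Φ^Y has the S-shadowing property, then φ almost lifts pseudo-orbits for S. -/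
open Set

universe u

/-! ### Lifting pseudo-orbits along factor maps -/

/-- `φ` lifts pseudo-orbits for `S`. -/
def LiftsPseudoOrbits {G X Y : Type u} [Group G] [TopologicalSpace X] [TopologicalSpace Y]
    (ΦX : DynAction G X) (ΦY : DynAction G Y) (φ : X → Y) (S : Set G) : Prop :=
  ∀ 𝒰X : Finset (Set X), IsFOC 𝒰X → ∃ 𝒰Y : Finset (Set Y), IsFOC 𝒰Y ∧
    ∀ y : G → Y, IsPseudoOrbit ΦY S 𝒰Y y →
      ∃ x : G → X, IsPseudoOrbit ΦX S 𝒰X x ∧ ∀ g : G, φ (x g) = y g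

/-- `φ` almost lifts pseudo-orbits for `S`. -/
def AlmostLiftsPseudoOrbits {G X Y : Type u} [Group G] [TopologicalSpace X]
    [TopologicalSpace Y] (ΦX : DynAction G X) (ΦY : DynAction G Y)
    (φ : X → Y) (S : Set G) : Prop :=
  ∀ 𝒰X : Finset (Set X), IsFOC 𝒰X → ∀ 𝒲Y : Finset (Set Y), IsFOC 𝒲Y →
    ∃ 𝒰Y : Finset (Set Y), IsFOC 𝒰Y ∧
      ∀ y : G → Y, IsPseudoOrbit ΦY S 𝒰Y y →
        ∃ x : G → X, IsPseudoOrbit ΦX S 𝒰X x ∧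
          ∀ g : G, ∃ W ∈ 𝒲Y, φ (x g) ∈ W ∧ y g ∈ W

/-
(2) is immediate: a shadowing point in `Y` lifts through the surjection `φ` to a point whose
orbit is a pseudo-orbit for every cover. For (1), pull a `Y`-pseudo-orbit back to an almost
lift in `X`, shadow it there and push the shadowing point forward. This incurs two errors,
one from the almost lift and one from the shadowing in `X`; they are absorbed by choosing
the auxiliary cover `𝒦` of `Y` so fine that two consecutive `𝒦`-close steps are `𝒰`-close,
which on a compact space comes from the Lebesgue number lemma for its unique uniformity.
-/

section Covers

variable {X Y : Type u} [TopologicalSpace X] [TopologicalSpace Y]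

theorem IsFOC.exists_mem {𝒰 : Finset (Set X)} (h𝒰 : IsFOC 𝒰) (x : X) :
    ∃ U ∈ 𝒰, x ∈ U := by
  simpa using h𝒰.2.ge (mem_univ x)

theorem isFOC_image {ι : Type*} [DecidableEq (Set X)] (t : Finset ι) (f : ι → Set X)
    (hopen : ∀ i ∈ t, IsOpen (f i)) (hcover : ⋃ i ∈ t, f i = univ) : IsFOC (t.image f) :=
  ⟨by simpa using hopen, by rwa [Finset.coe_image, sUnion_image]⟩

theorem IsFOC.preimage [DecidableEq (Set X)] {𝒦 : Finset (Set Y)} (h𝒦 : IsFOC 𝒦)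
    {f : X → Y} (hf : Continuous f) : IsFOC (𝒦.image (f ⁻¹' ·)) :=
  isFOC_image 𝒦 _ (fun K hK => (h𝒦.1 K hK).preimage hf) <| by
    rw [← preimage_iUnion₂, ← Finset.set_biUnion_coe, ← sUnion_eq_biUnion, h𝒦.2,
      preimage_univ]

theorem IsFOC.exists_comp_refinement [CompactSpace X] [R1Space X] {𝒰 : Finset (Set X)}
    (h𝒰 : IsFOC 𝒰) : ∃ 𝒦 : Finset (Set X), IsFOC 𝒦 ∧ ∀ a b c : X,
      (∃ K ∈ 𝒦, a ∈ K ∧ b ∈ K) → (∃ K ∈ 𝒦, b ∈ K ∧ c ∈ K) → ∃ U ∈ 𝒰, a ∈ U ∧ c ∈ U := by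
  classical
  let _ : UniformSpace X := uniformSpaceOfCompactR1
  obtain ⟨V, hV, hVleb⟩ := lebesgue_number_lemma_sUnion isCompact_univ h𝒰.1 h𝒰.2.ge
  obtain ⟨W, hW, hWopen, hWsymm, hWV⟩ := comp_open_symm_mem_uniformity_sets hV
  obtain ⟨t, ht⟩ := isCompact_univ.elim_finite_subcover (fun p : X => UniformSpace.ball p W)
    (fun p => UniformSpace.isOpen_ball p hWopen)
    (fun x _ => mem_iUnion.2 ⟨x, UniformSpace.mem_ball_self x hW⟩)
  refine ⟨t.image (UniformSpace.ball · W),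
    isFOC_image t _ (fun p _ => UniformSpace.isOpen_ball p hWopen) (univ_subset_iff.1 ht), ?_⟩
  rintro a b c ⟨_, hK, ha, hb⟩ ⟨_, hK', hb', hc⟩
  obtain ⟨p, -, rfl⟩ := Finset.mem_image.1 hK
  obtain ⟨p', -, rfl⟩ := Finset.mem_image.1 hK'
  -- both `a` and `c` lie in the `W ○ W`-ball around `b`, which the Lebesgue number puts in `𝒰`
  have near_b {q x : X} (hb : b ∈ UniformSpace.ball q W) (hx : x ∈ UniformSpace.ball q W) :
      x ∈ UniformSpace.ball b V :=
    hWV (UniformSpace.mem_ball_comp (UniformSpace.mem_ball_symmetry.1 hb) hx)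
  obtain ⟨U, hU, hbU⟩ := hVleb b (mem_univ b)
  exact ⟨U, hU, hbU (near_b hb ha), hbU (near_b hb' hc)⟩

end Covers

section PseudoOrbits

variable {G X Y : Type u} [Group G] [TopologicalSpace X] [TopologicalSpace Y]
  {ΦX : DynAction G X} {ΦY : DynAction G Y} {φ : X → Y} {S : Set G}

theorem isPseudoOrbit_orbit (Φ : DynAction G X) (S : Set G) {𝒰 : Finset (Set X)}
    (h𝒰 : IsFOC 𝒰) (z : X) : IsPseudoOrbit Φ S 𝒰 (fun g => Φ.act g z) := by
  choose U hU hzU using fun g => h𝒰.exists_mem (Φ.act g z)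
  exact ⟨U, hU, fun g s _ => ⟨hzU _, Φ.act_mul s g z ▸ hzU _⟩⟩

theorem Shadows.map [DecidableEq (Set X)] (hequiv : IsEquivariant ΦX ΦY φ)
    {𝒦 : Finset (Set Y)} {z : X} {x : G → X} (h : Shadows ΦX (𝒦.image (φ ⁻¹' ·)) z x) :
    Shadows ΦY 𝒦 (φ z) (φ ∘ x) := fun g => by
  obtain ⟨_, hU, hz, hx⟩ := h g
  obtain ⟨K, hK, rfl⟩ := Finset.mem_image.1 hU
  exact ⟨K, hK, hequiv g z ▸ hz, hx⟩

theorem AlmostLiftsPseudoOrbits.shadowingProperty [CompactSpace Y] [R1Space Y]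
    (hlift : AlmostLiftsPseudoOrbits ΦX ΦY φ S) (hcont : Continuous φ)
    (hequiv : IsEquivariant ΦX ΦY φ) (hX : ShadowingProperty ΦX S) :
    ShadowingProperty ΦY S := by
  classical
  intro 𝒰 h𝒰
  obtain ⟨𝒦, h𝒦, hcomp⟩ := h𝒰.exists_comp_refinement
  obtain ⟨𝒱X, h𝒱X, hshadowX⟩ := hX _ (h𝒦.preimage hcont)
  obtain ⟨𝒰Y, h𝒰Y, hliftY⟩ := hlift 𝒱X h𝒱X 𝒦 h𝒦
  refine ⟨𝒰Y, h𝒰Y, fun y hy => ?_⟩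
  obtain ⟨x, hx, hxy⟩ := hliftY y hy
  obtain ⟨z, hz⟩ := hshadowX x hx
  exact ⟨φ z, fun g => hcomp _ _ _ (hz.map hequiv g) (hxy g)⟩

theorem ShadowingProperty.almostLiftsPseudoOrbits (hY : ShadowingProperty ΦY S)
    (hsurj : Function.Surjective φ) (hequiv : IsEquivariant ΦX ΦY φ) :
    AlmostLiftsPseudoOrbits ΦX ΦY φ S := by
  intro 𝒰X h𝒰X 𝒲Y h𝒲Y
  obtain ⟨𝒱, h𝒱, hshadow⟩ := hY 𝒲Y h𝒲Y
  refine ⟨𝒱, h𝒱, fun y hy => ?_⟩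
  obtain ⟨w, hw⟩ := hshadow y hy
  obtain ⟨z, rfl⟩ := hsurj w
  refine ⟨fun g => ΦX.act g z, isPseudoOrbit_orbit ΦX S h𝒰X z, fun g => ?_⟩
  simpa only [hequiv g z] using hw g

end PseudoOrbits

theorem shadowing_almost_lifting_general
    {G X Y : Type} [Group G]
    [TopologicalSpace X]
    [TopologicalSpace Y] [CompactSpace Y] [T2Space Y]
    (ΦX : DynAction G X) (ΦY : DynAction G Y) (S : Finset G)
    (φ : X → Y) (hφ : IsFactorMap ΦX ΦY φ) :
    (ShadowingProperty ΦX (S : Set G) → AlmostLiftsPseudoOrbits ΦX ΦY φ (S : Set G) →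
      ShadowingProperty ΦY (S : Set G)) ∧
    (ShadowingProperty ΦY (S : Set G) → AlmostLiftsPseudoOrbits ΦX ΦY φ (S : Set G)) := by
  obtain ⟨hcont, hsurj, hequiv⟩ := hφ
  exact ⟨fun hX hlift => hlift.shadowingProperty hcont hequiv hX,
    fun hY => hY.almostLiftsPseudoOrbits hsurj hequiv⟩

/-- **Theorem 5.4.** (1) A factor map which almost lifts pseudo-orbits for `S`
transfers the `S`-shadowing property from `X` to `Y`; (2) if `Φ^Y` has the
`S`-shadowing property then every factor map onto `Y` almost lifts pseudo-orbits
for `S`. -/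
theorem shadowing_almost_lifting
    {G X Y : Type} [Group G] [Countable G]
    [TopologicalSpace X] [CompactSpace X] [T2Space X]
    [TopologicalSpace Y] [CompactSpace Y] [T2Space Y]
    (ΦX : DynAction G X) (ΦY : DynAction G Y) (S : Finset G)
    (φ : X → Y) (hφ : IsFactorMap ΦX ΦY φ) :
    (ShadowingProperty ΦX (S : Set G) → AlmostLiftsPseudoOrbits ΦX ΦY φ (S : Set G) →
      ShadowingProperty ΦY (S : Set G)) ∧
    (ShadowingProperty ΦY (S : Set G) → AlmostLiftsPseudoOrbits ΦX ΦY φ (S : Set G)) :=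
  shadowing_almost_lifting_general ΦX ΦY S φ hφ
end
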